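/- arXiv:math/9903193 — 5 statements merged into one kernel-verified Lean document; each statement's English description precedes it below -/
import Mathlib

section
/- Let Λ be a discrete additive subgroup of ℂ², let p₁, …, pₘ ∈ ℂ², and let Λ₀ = ⋃_{j=1}^{m} (Λ + pⱼ). Then there exists an invertible complex-linear map A : ℂ² → ℂ² such that the set {Im(π¹(A p)) : p ∈ Λ₀} is a closed discrete subset of ℝ, and moreover for all p, q ∈ A(Λ₀) with p ≠ q one has ‖p − q‖ ≥ 1 and either Im(π¹ p) = Im(π¹ q) or |Im(π¹ p) − Im(π¹ q)| ≥ 1. -/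
/-! Choose a nonzero real functional `f` on `ℂ²` that is integral on `Λ`: a dual-basis coordinate
if `Λ` spans `ℂ²` over `ℝ` (then it is a full lattice), a functional vanishing on its span
otherwise. Write `f = Im ∘ ℓ` with `ℓ` complex linear and complete `ℓ` to an automorphism `B` with
`π¹ ∘ B = ℓ`. Differences of points of `Λ₀` then lie in finitely many translates of `Λ`, and
differences of the values `Im (π¹ (B q))`, `q ∈ Λ₀`, in finitely many translates of `ℤ`: finite
unions of closed discrete sets, which avoid a punctured neighbourhood of `0`. Both sets are
therefore uniformly separated, and `A = t • B` for a large real `t` separates them by `1`. -/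

open Complex Filter Topology

theorem IsClosed.exists_pos_forall_le_dist_of_isDiscrete {X : Type*} [PseudoMetricSpace X]
    {S : Set X} (hc : IsClosed S) (hd : IsDiscrete S) (a : X) :
    ∃ ε > 0, ∀ x ∈ S, x ≠ a → ε ≤ dist x a := by
  have hS : Sᶜ ∈ 𝓝[≠] a :=
    disjoint_principal_right.1 (isClosed_and_discrete_iff.1 ⟨hc, hd⟩ a)
  obtain ⟨ε, hε, hball⟩ := Metric.mem_nhdsWithin_iff.1 hS
  exact ⟨ε, hε, fun x hx hxa => not_lt.1 fun h => hball ⟨h, hxa⟩ hx⟩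

theorem AddSubgroup.exists_pos_pairwise_le_dist_iUnion_image_add {E : Type*}
    [NormedAddCommGroup E] (G : AddSubgroup E) [DiscreteTopology G] {ι : Type*} [Finite ι]
    (p : ι → E) : ∃ ε > 0, (⋃ i, (· + p i) '' (G : Set E)).Pairwise (ε ≤ dist · ·) := by
  have hclosed (c : E) : IsClosed ((· + c) '' (G : Set E)) :=
    (Homeomorph.addRight c).isClosedMap _ G.isClosed_of_discrete
  have hdiscrete (c : E) : IsDiscrete ((· + c) '' (G : Set E)) :=
    (SetLike.isDiscrete_iff_discreteTopology.2 ‹_›).image (Homeomorph.addRight c).isInducing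
  set D := ⋃ ij : ι × ι, (· + (p ij.1 - p ij.2)) '' (G : Set E)
  obtain ⟨ε, hε, hD⟩ :=
    (isClosed_iUnion_of_finite fun ij => hclosed _).exists_pos_forall_le_dist_of_isDiscrete
      (IsDiscrete.iUnion (ι := ι × ι) (fun ij => hdiscrete _) fun ij => hclosed _) (0 : E)
  refine ⟨ε, hε, ?_⟩
  simp only [Set.Pairwise, Set.mem_iUnion, Set.mem_image, SetLike.mem_coe]
  rintro _ ⟨i, v, hv, rfl⟩ _ ⟨j, w, hw, rfl⟩ hne
  have hmem : v + p i - (w + p j) ∈ D :=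
    Set.mem_iUnion.2 ⟨(i, j), v - w, G.sub_mem hv hw, show v - w + (p i - p j) = _ by abel⟩
  simpa [dist_eq_norm] using hD _ hmem (sub_ne_zero.2 hne)

theorem Set.Pairwise.mul_le_dist_image {X Y : Type*} [PseudoMetricSpace X]
    [PseudoMetricSpace Y] {S : Set X} {ε c : ℝ} (hS : S.Pairwise (ε ≤ dist · ·)) (hc : 0 ≤ c)
    {g : X → Y} (hg : ∀ x y, c * dist x y ≤ dist (g x) (g y)) :
    (g '' S).Pairwise (c * ε ≤ dist · ·) := by
  rintro _ ⟨x, hx, rfl⟩ _ ⟨y, hy, rfl⟩ hne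
  have hxy : x ≠ y := by rintro rfl; exact hne rfl
  exact (mul_le_mul_of_nonneg_left (hS hx hy hxy) hc).trans (hg x y)

theorem Set.Pairwise.eventually_one_le_dist_image_smul {E : Type*} [SeminormedAddCommGroup E]
    [NormedSpace ℝ E] {S : Set E} {ε : ℝ} (hS : S.Pairwise (ε ≤ dist · ·)) (hε : 0 < ε) :
    ∀ᶠ t : ℝ in atTop, ((t • ·) '' S).Pairwise (1 ≤ dist · ·) := by
  filter_upwards [eventually_ge_atTop ε⁻¹] with t ht
  have ht₀ : 0 ≤ t := (inv_pos.2 hε).le.trans ht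
  refine (hS.mul_le_dist_image ht₀ fun x y => ?_).mono' fun x y h =>
    ((inv_le_iff_one_le_mul₀ hε).1 ht).trans h
  rw [dist_smul₀, Real.norm_of_nonneg ht₀]

theorem AddSubgroup.exists_dual_ne_zero_forall_mem_zmultiples_one {E : Type*}
    [NormedAddCommGroup E] [NormedSpace ℝ E] [FiniteDimensional ℝ E] [Nontrivial E]
    (Λ : AddSubgroup E) [DiscreteTopology Λ] :
    ∃ f : Module.Dual ℝ E, f ≠ 0 ∧ ∀ v ∈ Λ, f v ∈ AddSubgroup.zmultiples (1 : ℝ) := by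
  by_cases hspan : Submodule.span ℝ (Λ : Set E) = ⊤
  · let L : Submodule ℤ E := Λ.toIntSubmodule
    have : DiscreteTopology L := ‹_›
    have : IsZLattice ℝ L := ⟨hspan⟩
    let b := Module.Free.chooseBasis ℤ L
    let B := b.ofZLatticeBasis ℝ L
    obtain ⟨i⟩ : Nonempty (Module.Free.ChooseBasisIndex ℤ L) := B.index_nonempty
    refine ⟨B.coord i, fun h => by simpa using LinearMap.congr_fun h (B i), fun v hv => ?_⟩
    have hcoord : B.coord i v = b.repr ⟨v, hv⟩ i := by
      simpa using Module.Basis.ofZLatticeBasis_repr_apply ℝ L b ⟨v, hv⟩ i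
    exact hcoord ▸ AddSubgroup.intCast_mem_zmultiples_one _
  · obtain ⟨f, hf, hmap⟩ :=
      Submodule.exists_dual_map_eq_bot_of_lt_top (lt_top_iff_ne_top.2 hspan) inferInstance
    refine ⟨f, hf, fun v hv => ?_⟩
    have : f v ∈ (Submodule.span ℝ (Λ : Set E)).map f :=
      Submodule.mem_map_of_mem (Submodule.subset_span hv)
    rw [hmap, Submodule.mem_bot] at this
    exact this ▸ zero_mem _

theorem Module.Dual.exists_im_eq {V : Type*} [AddCommGroup V] [Module ℂ V]
    (f : Module.Dual ℝ V) : ∃ ℓ : Module.Dual ℂ V, ∀ v, (ℓ v).im = f v :=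
  ⟨I • f.extendRCLike, fun v => by
    rw [LinearMap.smul_apply, smul_eq_mul, I_mul_im]
    exact f.re_extendRCLike_apply (𝕜 := ℂ) v⟩

theorem exists_linearEquiv_fst_eq_of_ne_zero {K : Type*} [Field K] (ℓ : Module.Dual K (K × K))
    (hℓ : ℓ ≠ 0) : ∃ A : (K × K) ≃ₗ[K] K × K, ∀ v, (A v).1 = ℓ v := by
  wlog ha : ℓ (1, 0) ≠ 0 generalizing ℓ
  · set σ := LinearEquiv.prodComm K K K
    have hb : ℓ (0, 1) ≠ 0 := fun hb => hℓ <| LinearMap.prod_ext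
      (LinearMap.ext_ring (by simpa using not_not.1 ha)) (LinearMap.ext_ring (by simpa using hb))
    have hℓσ : ℓ ∘ₗ σ.toLinearMap ≠ 0 := fun h => hℓ <| LinearMap.ext fun v => by
      simpa [σ] using LinearMap.congr_fun h (σ.symm v)
    obtain ⟨A, hA⟩ := this (ℓ ∘ₗ σ.toLinearMap) hℓσ (by simpa [σ] using hb)
    exact ⟨σ.trans A, fun v => by simpa [σ] using hA (σ v)⟩
  have hinj : Function.Injective (ℓ.prod (LinearMap.snd K K K)) := by
    refine (injective_iff_map_eq_zero _).2 fun ⟨x, y⟩ h => ?_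
    simp only [LinearMap.prod_apply, Function.prod, LinearMap.snd_apply, Prod.mk_eq_zero] at h
    obtain ⟨hx, rfl⟩ := h
    have : ℓ (x, 0) = x * ℓ (1, 0) := by simpa using ℓ.map_smul x (1, 0)
    simp_all
  exact ⟨LinearEquiv.ofInjectiveEndo _ hinj, fun v => rfl⟩

theorem AddSubgroup.exists_linearEquiv_im_fst_mem_zmultiples_one (Λ : AddSubgroup (ℂ × ℂ))
    [DiscreteTopology Λ] :
    ∃ B : (ℂ × ℂ) ≃ₗ[ℂ] ℂ × ℂ, ∀ v ∈ Λ, (B v).1.im ∈ AddSubgroup.zmultiples (1 : ℝ) := by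
  obtain ⟨f, hf, hfΛ⟩ := Λ.exists_dual_ne_zero_forall_mem_zmultiples_one
  obtain ⟨ℓ, hℓ⟩ := f.exists_im_eq
  have hℓ₀ : ℓ ≠ 0 := fun h => hf <| LinearMap.ext fun v => by simpa [h] using (hℓ v).symm
  obtain ⟨B, hB⟩ := exists_linearEquiv_fst_eq_of_ne_zero ℓ hℓ₀
  exact ⟨B, fun v hv => by simpa [hB, hℓ] using hfΛ v hv⟩

theorem Set.Pairwise.discreteTopology {X : Type*} [PseudoMetricSpace X] {S : Set X} {ε : ℝ}
    (hS : S.Pairwise (ε ≤ dist · ·)) (hε : 0 < ε) : DiscreteTopology S :=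
  .of_forall_le_dist hε fun x y hxy => hS x.2 y.2 (Subtype.coe_ne_coe.2 hxy)

theorem LinearEquiv.exists_smul_pairwise_one_le_dist {S : Set (ℂ × ℂ)} {η δ : ℝ}
    (B : (ℂ × ℂ) ≃ₗ[ℂ] ℂ × ℂ) (hB : (B '' S).Pairwise (η ≤ dist · ·))
    (hIm : ((fun q => (B q).1.im) '' S).Pairwise (δ ≤ dist · ·)) (hη : 0 < η) (hδ : 0 < δ) :
    ∃ A : (ℂ × ℂ) ≃ₗ[ℂ] ℂ × ℂ, (A '' S).Pairwise (1 ≤ dist · ·) ∧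
      {y : ℝ | ∃ q ∈ S, (A q).1.im = y}.Pairwise (1 ≤ dist · ·) := by
  obtain ⟨t, ⟨hsepB, hsepIm⟩, ht⟩ := (((hB.eventually_one_le_dist_image_smul hη).and
    (hIm.eventually_one_le_dist_image_smul hδ)).and (eventually_gt_atTop 0)).exists
  let A := B.trans (LinearEquiv.smulOfNeZero ℂ (ℂ × ℂ) t (by exact_mod_cast ht.ne'))
  have hA : (t • ·) '' (B '' S) = A '' S := by
    rw [Set.image_image]
    rfl
  have hY : (t • ·) '' ((fun q => (B q).1.im) '' S) = {y : ℝ | ∃ q ∈ S, (A q).1.im = y} := by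
    rw [Set.image_image]
    refine congrArg (· '' S) (funext fun q => ?_)
    simp [A]
  exact ⟨A, hA ▸ hsepB, hY ▸ hsepIm⟩

/-- there is an invertible complex-linear A : ℂ² → ℂ² such that
{Im(π¹(A p)) : p ∈ Λ₀} is closed and discrete in ℝ, and any two distinct points
of A(Λ₀) are at distance ≥ 1, with first-coordinate imaginary parts either equal
or at distance ≥ 1. -/
theorem stmt4 (Λ : AddSubgroup (ℂ × ℂ)) (hΛ : DiscreteTopology Λ)
    (m : ℕ) (p : Fin m → ℂ × ℂ) :
    ∃ A : (ℂ × ℂ) ≃ₗ[ℂ] (ℂ × ℂ),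
      (letI Λ₀ : Set (ℂ × ℂ) := ⋃ j, (fun v => v + p j) '' (Λ : Set (ℂ × ℂ))
       IsClosed {y : ℝ | ∃ q ∈ Λ₀, (A q).1.im = y} ∧
       DiscreteTopology {y : ℝ | ∃ q ∈ Λ₀, (A q).1.im = y} ∧
       ∀ x ∈ (A : (ℂ × ℂ) → (ℂ × ℂ)) '' Λ₀, ∀ y ∈ (A : (ℂ × ℂ) → (ℂ × ℂ)) '' Λ₀,
         x ≠ y → 1 ≤ ‖x - y‖ ∧ (x.1.im = y.1.im ∨ 1 ≤ |x.1.im - y.1.im|)) := by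
  set Λ₀ : Set (ℂ × ℂ) := ⋃ j, (fun v => v + p j) '' (Λ : Set (ℂ × ℂ))
  obtain ⟨B, hB⟩ := Λ.exists_linearEquiv_im_fst_mem_zmultiples_one
  obtain ⟨K, hK, hBK⟩ := (B : (ℂ × ℂ) →ₗ[ℂ] ℂ × ℂ).exists_antilipschitzWith B.ker
  obtain ⟨ε, hε, hΛ₀⟩ := Λ.exists_pos_pairwise_le_dist_iUnion_image_add p
  obtain ⟨δ, hδ, hZ⟩ :=
    (AddSubgroup.zmultiples (1 : ℝ)).exists_pos_pairwise_le_dist_iUnion_image_add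
      fun j => (B (p j)).1.im
  have himΛ₀ : (fun q => (B q).1.im) '' Λ₀ ⊆
      ⋃ j, (· + (B (p j)).1.im) '' (AddSubgroup.zmultiples (1 : ℝ) : Set ℝ) := by
    rintro _ ⟨_, hq, rfl⟩
    obtain ⟨j, v, hv, rfl⟩ := Set.mem_iUnion.1 hq
    exact Set.mem_iUnion.2 ⟨j, _, hB v hv, by simp⟩
  obtain ⟨A, hsepA, hsepIm⟩ := B.exists_smul_pairwise_one_le_dist
    (hΛ₀.mul_le_dist_image (by positivity) hBK.mul_le_dist) (hZ.mono himΛ₀) (by positivity) hδ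
  refine ⟨A, Metric.isClosed_of_pairwise_le_dist one_pos hsepIm, hsepIm.discreteTopology one_pos,
    ?_⟩
  rintro _ ⟨q, hq, rfl⟩ _ ⟨r, hr, rfl⟩ hne
  refine ⟨by simpa [dist_eq_norm] using hsepA ⟨q, hq, rfl⟩ ⟨r, hr, rfl⟩ hne, ?_⟩
  exact or_iff_not_imp_left.2 fun h => by
    simpa [Real.dist_eq] using hsepIm ⟨q, hq, rfl⟩ ⟨r, hr, rfl⟩ h
end

section
/- Let V = {(z, w) ∈ ℂ² : |w| < 1 + |z|²}. Then there exists an injective holomorphic map Φ : ℂ² → ℂ² whose image is contained in V. -/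
/-!
The map `G (z, w) = (2z - 4(2w - 4z²)², 2w - 4z²)` is a polynomial automorphism of `ℂ²` with
`G 0 = 0` and `G' 0 = 2`. Its Poincaré map `Φ = lim Gⁿ ∘ 2⁻ⁿ` satisfies `Φ (2x) = G (Φ x)`, so,
`G` being injective and holomorphic, `Φ` is so on all of `ℂ²` as soon as it is so near `0`, where
`Φ - id` is a `1/2`-Lipschitz uniform limit of holomorphic maps. The image of `Φ` is attracted to `0` by `G⁻¹`,
whereas the complement `{1 + |z|² ≤ |w|}` of `V` is mapped into itself by `G⁻¹` and stays away
from `0`; hence `Φ` takes values in `V`.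
-/

open Metric Set Filter Topology Function
open scoped NNReal

section UniformLimit

variable {E F : Type*} [NormedAddCommGroup E] [NormedSpace ℂ E]
  [NormedAddCommGroup F] [NormedSpace ℂ F]

theorem norm_fderiv_le_of_forall_norm_le {f : E → F} {x : E} {R ε : ℝ} (hR : 0 < R)
    (hf : DifferentiableOn ℂ f (ball x R)) (hε : ∀ z ∈ ball x R, ‖f z‖ ≤ ε) :
    ‖fderiv ℂ f x‖ ≤ 2 * ε / R := by
  refine Complex.norm_fderiv_le_div_of_mapsTo_ball hf (fun z hz => ?_) hR
  rw [mem_closedBall, dist_eq_norm]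
  linarith [norm_sub_le (f z) (f x), hε z hz, hε x (mem_ball_self hR)]

theorem differentiableOn_of_tendstoUniformlyOn [CompleteSpace F] {f : ℕ → E → F} {g : E → F}
    {U : Set E} (hU : IsOpen U) (hf : ∀ n, DifferentiableOn ℂ (f n) U)
    (hfg : TendstoUniformlyOn f g atTop U) : DifferentiableOn ℂ g U := by
  intro x hx
  -- Cauchy estimates turn uniform convergence of the `f n` into that of their derivatives.
  obtain ⟨R, hR, hRU⟩ := Metric.isOpen_iff.mp hU x hx
  have hball : ∀ y ∈ ball x (R / 2), ball y (R / 2) ⊆ U := fun y hy =>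
    (ball_subset_ball' (by linarith [mem_ball.mp hy])).trans hRU
  have hsub : ball x (R / 2) ⊆ U := (ball_subset_ball (by linarith)).trans hRU
  have hdiff : ∀ k, ∀ y ∈ ball x (R / 2), DifferentiableAt ℂ (f k) y := fun k y hy =>
    (hf k).differentiableAt (hU.mem_nhds (hsub hy))
  have hderiv : UniformCauchySeqOn (fun n => fderiv ℂ (f n)) atTop (ball x (R / 2)) := by
    rw [Metric.uniformCauchySeqOn_iff]
    intro ε hε
    obtain ⟨N, hN⟩ := Metric.uniformCauchySeqOn_iff.mp hfg.uniformCauchySeqOn (ε * R / 8)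
      (by positivity)
    refine ⟨N, fun m hm n hn y hy => ?_⟩
    have hest := norm_fderiv_le_of_forall_norm_le (half_pos hR)
      (((hf m).sub (hf n)).mono (hball y hy))
      (fun z hz => by simpa [dist_eq_norm] using (hN m hm n hn z (hball y hy hz)).le)
    rw [dist_eq_norm, ← fderiv_sub (hdiff m y hy) (hdiff n y hy)]
    calc ‖fderiv ℂ (f m - f n) y‖ ≤ 2 * (ε * R / 8) / (R / 2) := hest
      _ < ε := by field_simp; linarith
  have hlim : ∀ y ∈ ball x (R / 2),
      Tendsto (fun n => fderiv ℂ (f n) y) atTop (𝓝 (limUnder atTop fun n => fderiv ℂ (f n) y)) :=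
    fun y hy => (hderiv.cauchySeq hy).tendsto_limUnder
  exact (hasFDerivAt_of_tendstoUniformlyOn isOpen_ball (hderiv.tendstoUniformlyOn_of_tendsto hlim)
    (fun n y hy => (hdiff n y hy).hasFDerivAt) (fun y hy => hfg.tendsto_at (hsub hy))
    (mem_ball_self (half_pos hR))).differentiableAt.differentiableWithinAt

end UniformLimit

section Koenigs

variable {E : Type*} [NormedAddCommGroup E] [NormedSpace ℂ E] {G : E → E} {L : ℝ≥0}

/-- A quantitative form of `G 0 = 0`, `G' 0 = 2 • id` with `G'` Lipschitz near `0`. -/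
structure DoublingToSecondOrder (G : E → E) (L : ℝ≥0) : Prop where
  map_zero : G 0 = 0
  norm_sub_le : ∀ ρ ≤ 1, ∀ u ∈ closedBall (0 : E) ρ, ∀ v ∈ closedBall (0 : E) ρ,
    ‖(G u - (2 : ℂ) • u) - (G v - (2 : ℂ) • v)‖ ≤ L * ρ * ‖u - v‖

noncomputable def koenigsApprox (G : E → E) (n : ℕ) (x : E) : E := G^[n] ((2⁻¹ : ℂ) ^ n • x)

noncomputable def koenigs (G : E → E) (x : E) : E := limUnder atTop fun n => koenigsApprox G n x

theorem norm_inv_two_pow_smul (n : ℕ) (x : E) : ‖(2⁻¹ : ℂ) ^ n • x‖ = ‖x‖ / 2 ^ n := by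
  rw [norm_smul, norm_pow, norm_inv, Complex.norm_ofNat, inv_pow, inv_mul_eq_div]

theorem koenigsApprox_add (n k : ℕ) (x : E) :
    koenigsApprox G (n + k) x = G^[k] (koenigsApprox G n ((2⁻¹ : ℂ) ^ k • x)) := by
  rw [koenigsApprox, koenigsApprox, add_comm n k, iterate_add_apply, smul_smul, pow_add,
    mul_comm]

theorem koenigsApprox_two_pow_smul (n : ℕ) (x : E) :
    koenigsApprox G n ((2 : ℂ) ^ n • x) = G^[n] x := by
  rw [koenigsApprox, smul_smul, ← mul_pow, inv_mul_cancel₀ two_ne_zero, one_pow, one_smul]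

theorem koenigsApprox_succ_sub_self (n : ℕ) (x : E) :
    koenigsApprox G (n + 1) x - x =
      (G (koenigsApprox G n ((2⁻¹ : ℂ) • x)) - (2 : ℂ) • koenigsApprox G n ((2⁻¹ : ℂ) • x))
        + (2 : ℂ) • (koenigsApprox G n ((2⁻¹ : ℂ) • x) - (2⁻¹ : ℂ) • x) := by
  rw [koenigsApprox_add n 1, pow_one, iterate_one, smul_sub, smul_smul,
    mul_inv_cancel₀ two_ne_zero, one_smul]
  abel

theorem koenigsApprox_apply_zero (hG : G 0 = 0) (n : ℕ) : koenigsApprox G n 0 = 0 := by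
  rw [koenigsApprox, smul_zero, iterate_fixed hG]

noncomputable def koenigsRadius (L : ℝ≥0) : ℝ := (4 * (L + 1))⁻¹

theorem koenigsRadius_pos (L : ℝ≥0) : 0 < koenigsRadius L := by
  unfold koenigsRadius; positivity

theorem koenigsRadius_le (L : ℝ≥0) : koenigsRadius L ≤ 1 / 4 := by
  unfold koenigsRadius
  rw [one_div]
  exact inv_anti₀ (by norm_num) (by linarith [L.2])

theorem mul_koenigsRadius_le (L : ℝ≥0) : L * koenigsRadius L ≤ 1 / 4 := by
  unfold koenigsRadius
  rw [← div_eq_mul_inv, div_le_iff₀ (by positivity)]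
  linarith

theorem tendsto_inv_two_pow_smul (x : E) :
    Tendsto (fun k : ℕ => (2⁻¹ : ℂ) ^ k • x) atTop (𝓝 0) := by
  simpa using
    (tendsto_pow_atTop_nhds_zero_of_norm_lt_one (by norm_num : ‖(2⁻¹ : ℂ)‖ < 1)).smul_const x

namespace DoublingToSecondOrder

theorem norm_koenigsApprox_sub_sub_le (hG : DoublingToSecondOrder G L) (n : ℕ) {s : ℝ}
    (hs : s ≤ 1) (hLs : L * s ≤ 1) {x y : E} (hx : x ∈ closedBall 0 s)
    (hy : y ∈ closedBall 0 s) :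
    ‖(koenigsApprox G n x - x) - (koenigsApprox G n y - y)‖ ≤ 2 * L * s * ‖x - y‖ := by
  rw [mem_closedBall_zero_iff] at hx hy
  have hs0 : 0 ≤ s := (norm_nonneg x).trans hx
  have hL : (0 : ℝ) ≤ L := L.2
  induction n generalizing s x y with
  | zero => simp only [koenigsApprox, pow_zero, one_smul, iterate_zero_apply, sub_self,
      norm_zero]; positivity
  | succ n ih =>
    set x' := (2⁻¹ : ℂ) • x
    set y' := (2⁻¹ : ℂ) • y
    have hx' : ‖x'‖ = ‖x‖ / 2 := by simpa using norm_inv_two_pow_smul 1 x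
    have hy' : ‖y'‖ = ‖y‖ / 2 := by simpa using norm_inv_two_pow_smul 1 y
    have hxy' : ‖x' - y'‖ = ‖x - y‖ / 2 := by
      simpa [x', y', smul_sub] using norm_inv_two_pow_smul 1 (x - y)
    have ih' := fun {a b : E} (ha : ‖a‖ ≤ s / 2) (hb : ‖b‖ ≤ s / 2) =>
      ih (by linarith) (by nlinarith) ha hb (by positivity)
    have hxy := ih' (a := x') (b := y') (by rw [hx']; linarith) (by rw [hy']; linarith)
    have hsmall : ∀ {a : E}, ‖a‖ ≤ s / 2 → ‖koenigsApprox G n a‖ ≤ s := fun {a} ha => by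
      have h := ih' ha (b := 0) (by rw [norm_zero]; positivity)
      rw [koenigsApprox_apply_zero hG.map_zero, sub_zero, sub_zero, sub_zero] at h
      have := norm_le_insert' (koenigsApprox G n a) a
      nlinarith [mul_le_mul_of_nonneg_right hLs (norm_nonneg a)]
    set u := koenigsApprox G n x'
    set v := koenigsApprox G n y'
    have hu : u ∈ closedBall 0 s := mem_closedBall_zero_iff.mpr (hsmall (by rw [hx']; linarith))
    have hv : v ∈ closedBall 0 s := mem_closedBall_zero_iff.mpr (hsmall (by rw [hy']; linarith))
    have huv : ‖u - v‖ ≤ ‖x - y‖ := by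
      have : u - v = (x' - y') + ((u - x') - (v - y')) := by abel
      rw [this]
      nlinarith [norm_add_le (x' - y') ((u - x') - (v - y')), norm_nonneg (x - y)]
    have hsplit : (koenigsApprox G (n + 1) x - x) - (koenigsApprox G (n + 1) y - y) =
        ((G u - (2 : ℂ) • u) - (G v - (2 : ℂ) • v)) + (2 : ℂ) • ((u - x') - (v - y')) := by
      rw [koenigsApprox_succ_sub_self, koenigsApprox_succ_sub_self, smul_sub (2 : ℂ) (u - x')]
      abel
    rw [hsplit]
    calc _ ≤ L * s * ‖u - v‖ + 2 * ‖(u - x') - (v - y')‖ := by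
          refine (norm_add_le _ _).trans (add_le_add (hG.norm_sub_le s hs u hu v hv) ?_)
          rw [norm_smul, Complex.norm_ofNat]
      _ ≤ 2 * L * s * ‖x - y‖ := by
          rw [hxy'] at hxy
          nlinarith [mul_le_mul_of_nonneg_left huv (mul_nonneg hL hs0)]

theorem norm_koenigsApprox_add_sub_le (hG : DoublingToSecondOrder G L) (m n : ℕ) {x : E}
    (hx : x ∈ closedBall 0 (koenigsRadius L)) :
    ‖koenigsApprox G (m + n) x - koenigsApprox G n x‖ ≤ koenigsRadius L / 2 ^ n := by
  set r := koenigsRadius L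
  have hr0 : 0 < r := koenigsRadius_pos L
  have hr : r ≤ 1 / 4 := koenigsRadius_le L
  have hLr : L * r ≤ 1 / 4 := mul_koenigsRadius_le L
  have hL : (0 : ℝ) ≤ L := L.2
  rw [mem_closedBall_zero_iff] at hx
  -- `koenigsApprox G (m + n) x = koenigsApprox G n p`, and `p - x` is quadratically small in `x`.
  set y := (2⁻¹ : ℂ) ^ n • x
  set p := (2 : ℂ) ^ n • koenigsApprox G m y
  have h2n : (0 : ℝ) < 2 ^ n := by positivity
  have hy : ‖y‖ = ‖x‖ / 2 ^ n := norm_inv_two_pow_smul n x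
  have hxy : x = (2 : ℂ) ^ n • y := by
    rw [smul_smul, ← mul_pow, mul_inv_cancel₀ two_ne_zero, one_pow, one_smul]
  have hyr : ‖y‖ ≤ r := by
    rw [hy, div_le_iff₀ h2n]; nlinarith [one_le_pow₀ (M₀ := ℝ) (a := 2) (n := n) (by norm_num)]
  have hq : ‖koenigsApprox G m y - y‖ ≤ 2 * L * ‖y‖ * ‖y‖ := by
    have := hG.norm_koenigsApprox_sub_sub_le m (s := ‖y‖) (by linarith) (by nlinarith)
      (mem_closedBall_zero_iff.mpr le_rfl) (mem_closedBall_self (norm_nonneg y))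
    rwa [koenigsApprox_apply_zero hG.map_zero, sub_zero, sub_zero, sub_zero] at this
  have hpx : ‖p - x‖ ≤ 2 * L * ‖x‖ * ‖y‖ := by
    have hx' : ‖x‖ = 2 ^ n * ‖y‖ := by rw [hy]; field_simp
    rw [hxy, ← smul_sub, norm_smul, norm_pow, Complex.norm_ofNat, ← hxy, hx']
    nlinarith
  have hp : p ∈ closedBall 0 (2 * r) := by
    rw [mem_closedBall_zero_iff]
    nlinarith [norm_le_insert' p x, mul_le_mul hx hyr (norm_nonneg y) hr0.le]
  have hlip := hG.norm_koenigsApprox_sub_sub_le n (s := 2 * r) (by linarith) (by nlinarith) hp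
    (mem_closedBall_zero_iff.mpr (by linarith : ‖x‖ ≤ 2 * r))
  have hsplit : koenigsApprox G (m + n) x - koenigsApprox G n x =
      (p - x) + ((koenigsApprox G n p - p) - (koenigsApprox G n x - x)) := by
    rw [koenigsApprox_add, koenigsApprox_two_pow_smul]
    abel
  have hLxy : L * ‖x‖ * ‖y‖ ≤ ‖y‖ / 4 := by
    have := mul_le_mul_of_nonneg_left hx hL
    nlinarith [norm_nonneg y]
  rw [hsplit]
  calc _ ≤ ‖p - x‖ + 2 * L * (2 * r) * ‖p - x‖ := (norm_add_le _ _).trans (by linarith)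
    _ ≤ ‖y‖ := by nlinarith [norm_nonneg (p - x)]
    _ ≤ r / 2 ^ n := by rw [hy]; gcongr

theorem uniformCauchySeqOn_koenigsApprox (hG : DoublingToSecondOrder G L) :
    UniformCauchySeqOn (koenigsApprox G) atTop (closedBall 0 (koenigsRadius L)) := by
  rw [Metric.uniformCauchySeqOn_iff]
  intro ε hε
  have hlim : Tendsto (fun N : ℕ => 2 * koenigsRadius L / 2 ^ N) atTop (𝓝 0) :=
    tendsto_const_nhds.div_atTop (tendsto_pow_atTop_atTop_of_one_lt one_lt_two)
  obtain ⟨N, hN⟩ := (hlim.eventually (gt_mem_nhds hε)).exists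
  refine ⟨N, fun m hm n hn x hx => ?_⟩
  obtain ⟨a, rfl⟩ := Nat.exists_eq_add_of_le' hm
  obtain ⟨b, rfl⟩ := Nat.exists_eq_add_of_le' hn
  calc dist (koenigsApprox G (a + N) x) (koenigsApprox G (b + N) x)
      ≤ dist (koenigsApprox G (a + N) x) (koenigsApprox G N x)
        + dist (koenigsApprox G (b + N) x) (koenigsApprox G N x) := dist_triangle_right _ _ _
    _ ≤ koenigsRadius L / 2 ^ N + koenigsRadius L / 2 ^ N := by
        rw [dist_eq_norm, dist_eq_norm]
        exact add_le_add (hG.norm_koenigsApprox_add_sub_le a N hx)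
          (hG.norm_koenigsApprox_add_sub_le b N hx)
    _ < ε := by rw [← add_div, ← two_mul]; exact hN

variable [CompleteSpace E]

theorem tendstoUniformlyOn_koenigs (hG : DoublingToSecondOrder G L) :
    TendstoUniformlyOn (koenigsApprox G) (koenigs G) atTop (closedBall 0 (koenigsRadius L)) :=
  hG.uniformCauchySeqOn_koenigsApprox.tendstoUniformlyOn_of_tendsto fun _ hx =>
    (hG.uniformCauchySeqOn_koenigsApprox.cauchySeq hx).tendsto_limUnder

theorem norm_koenigs_sub_sub_le (hG : DoublingToSecondOrder G L) {x y : E}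
    (hx : x ∈ closedBall 0 (koenigsRadius L)) (hy : y ∈ closedBall 0 (koenigsRadius L)) :
    ‖(koenigs G x - x) - (koenigs G y - y)‖ ≤ ‖x - y‖ / 2 := by
  have hlip : ∀ n, ‖(koenigsApprox G n x - x) - (koenigsApprox G n y - y)‖ ≤ ‖x - y‖ / 2 :=
    fun n => (hG.norm_koenigsApprox_sub_sub_le n (by linarith [koenigsRadius_le L])
      (by linarith [mul_koenigsRadius_le L]) hx hy).trans (by
        nlinarith [mul_koenigsRadius_le L, norm_nonneg (x - y)])
  refine le_of_tendsto' (((hG.tendstoUniformlyOn_koenigs.tendsto_at hx).sub_const x).sub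
    ((hG.tendstoUniformlyOn_koenigs.tendsto_at hy).sub_const y)).norm hlip

theorem koenigs_zero (hG : DoublingToSecondOrder G L) : koenigs G 0 = 0 :=
  tendsto_nhds_unique (hG.tendstoUniformlyOn_koenigs.tendsto_at
    (mem_closedBall_self (koenigsRadius_pos L).le))
    (by simp only [koenigsApprox_apply_zero hG.map_zero]; exact tendsto_const_nhds)

theorem norm_koenigs_le (hG : DoublingToSecondOrder G L) {x : E}
    (hx : x ∈ closedBall 0 (koenigsRadius L)) : ‖koenigs G x‖ ≤ 2 * ‖x‖ := by
  have := hG.norm_koenigs_sub_sub_le hx (mem_closedBall_self (koenigsRadius_pos L).le)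
  rw [hG.koenigs_zero, sub_zero, sub_zero, sub_zero] at this
  linarith [norm_le_insert' (koenigs G x) x, norm_nonneg x]

theorem injOn_koenigs (hG : DoublingToSecondOrder G L) :
    InjOn (koenigs G) (closedBall 0 (koenigsRadius L)) := by
  intro x hx y hy hxy
  have := hG.norm_koenigs_sub_sub_le hx hy
  rw [hxy, sub_sub_sub_cancel_left, norm_sub_rev] at this
  exact sub_eq_zero.mp (norm_le_zero_iff.mp (by linarith [norm_nonneg (x - y)]))

theorem tendsto_koenigsApprox (hG : DoublingToSecondOrder G L) (hGc : Continuous G) (x : E) :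
    Tendsto (fun n => koenigsApprox G n x) atTop (𝓝 (koenigs G x)) := by
  obtain ⟨k, hk⟩ := ((tendsto_inv_two_pow_smul x).eventually
    (closedBall_mem_nhds 0 (koenigsRadius_pos L))).exists
  have h := ((hGc.iterate k).tendsto _).comp (hG.tendstoUniformlyOn_koenigs.tendsto_at hk)
  simp only [comp_def, ← koenigsApprox_add] at h
  exact tendsto_nhds_limUnder ⟨_, (tendsto_add_atTop_iff_nat k).mp h⟩

theorem koenigs_two_smul (hG : DoublingToSecondOrder G L) (hGc : Continuous G) (x : E) :
    koenigs G ((2 : ℂ) • x) = G (koenigs G x) := by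
  have h := (hGc.tendsto _).comp (hG.tendsto_koenigsApprox hGc x)
  have e : ∀ n, koenigsApprox G (n + 1) ((2 : ℂ) • x) = G (koenigsApprox G n x) := fun n => by
    rw [koenigsApprox_add, pow_one, smul_smul, inv_mul_cancel₀ two_ne_zero, one_smul, iterate_one]
  refine tendsto_nhds_unique ((tendsto_add_atTop_iff_nat 1).mpr
    (hG.tendsto_koenigsApprox hGc _)) ?_
  simpa only [e, comp_def] using h

theorem koenigs_eq_iterate (hG : DoublingToSecondOrder G L) (hGc : Continuous G) (k : ℕ) (x : E) :
    koenigs G x = G^[k] (koenigs G ((2⁻¹ : ℂ) ^ k • x)) := by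
  induction k with
  | zero => rw [pow_zero, one_smul, iterate_zero_apply]
  | succ k ih =>
    have h2 : (2 : ℂ) • (2⁻¹ : ℂ) ^ (k + 1) • x = (2⁻¹ : ℂ) ^ k • x := by
      rw [smul_smul, pow_succ, mul_left_comm, mul_inv_cancel₀ two_ne_zero, mul_one]
    rw [ih, ← h2, hG.koenigs_two_smul hGc, ← iterate_succ_apply]

theorem injective_koenigs (hG : DoublingToSecondOrder G L) (hGc : Continuous G)
    (hGi : Injective G) : Injective (koenigs G) := by
  intro x y hxy
  obtain ⟨k, hkx, hky⟩ := (((tendsto_inv_two_pow_smul x).eventually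
    (closedBall_mem_nhds 0 (koenigsRadius_pos L))).and ((tendsto_inv_two_pow_smul y).eventually
    (closedBall_mem_nhds 0 (koenigsRadius_pos L)))).exists
  rw [hG.koenigs_eq_iterate hGc k x, hG.koenigs_eq_iterate hGc k y] at hxy
  exact smul_right_injective E (pow_ne_zero k (inv_ne_zero two_ne_zero))
    (hG.injOn_koenigs hkx hky (hGi.iterate k hxy))

theorem differentiable_koenigs (hG : DoublingToSecondOrder G L) (hGd : Differentiable ℂ G) :
    Differentiable ℂ (koenigs G) := by
  intro x
  obtain ⟨k, hk⟩ := ((tendsto_inv_two_pow_smul x).eventually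
    (ball_mem_nhds 0 (koenigsRadius_pos L))).exists
  have hball : DifferentiableOn ℂ (koenigs G) (ball 0 (koenigsRadius L)) :=
    differentiableOn_of_tendstoUniformlyOn isOpen_ball
      (fun n => ((hGd.iterate n).comp (differentiable_id.const_smul _)).differentiableOn)
      (hG.tendstoUniformlyOn_koenigs.mono ball_subset_closedBall)
  rw [funext (hG.koenigs_eq_iterate hGd.continuous k)]
  exact (hGd.iterate k _).comp x ((hball.differentiableAt (isOpen_ball.mem_nhds hk)).comp x
    (differentiableAt_id.const_smul _))

theorem koenigs_notMem (hG : DoublingToSecondOrder G L) (hGc : Continuous G) {F : E → E}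
    (hF : LeftInverse F G) {B : Set E} (hB : MapsTo F B B) (hB0 : Bᶜ ∈ 𝓝 0) (x : E) :
    koenigs G x ∉ B := by
  intro hx
  have hmem : ∀ k, koenigs G ((2⁻¹ : ℂ) ^ k • x) ∈ B := fun k => by
    have := hB.iterate k hx
    rwa [hG.koenigs_eq_iterate hGc k x, hF.iterate k] at this
  have hlim : Tendsto (fun k => koenigs G ((2⁻¹ : ℂ) ^ k • x)) atTop (𝓝 0) := by
    refine squeeze_zero_norm' (a := fun k => 2 * ‖(2⁻¹ : ℂ) ^ k • x‖) ?_ ?_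
    filter_upwards [(tendsto_inv_two_pow_smul x).eventually
      (closedBall_mem_nhds 0 (koenigsRadius_pos L))] with k hk using hG.norm_koenigs_le hk
    simpa only [norm_zero, mul_zero] using (tendsto_inv_two_pow_smul x).norm.const_mul 2
  obtain ⟨k, hk⟩ := (hlim.eventually hB0).exists
  exact hk (hmem k)

end DoublingToSecondOrder

end Koenigs

theorem norm_sq_sub_sq_le {R : Type*} [NormedCommRing R] {a b : R} {ρ : ℝ} (ha : ‖a‖ ≤ ρ)
    (hb : ‖b‖ ≤ ρ) : ‖a ^ 2 - b ^ 2‖ ≤ 2 * ρ * ‖a - b‖ := by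
  rw [sq_sub_sq]
  refine (norm_mul_le _ _).trans (mul_le_mul_of_nonneg_right ?_ (norm_nonneg _))
  linarith [norm_add_le a b]

noncomputable def henon (y : ℂ × ℂ) : ℂ × ℂ :=
  (2 * y.1 - 4 * (2 * y.2 - 4 * y.1 ^ 2) ^ 2, 2 * y.2 - 4 * y.1 ^ 2)

noncomputable def henonInv (y : ℂ × ℂ) : ℂ × ℂ :=
  ((y.1 + 4 * y.2 ^ 2) / 2, (y.2 + (y.1 + 4 * y.2 ^ 2) ^ 2) / 2)

theorem leftInverse_henonInv : LeftInverse henonInv henon := by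
  rintro ⟨z, w⟩
  simp only [henon, henonInv, Prod.mk.injEq]
  constructor <;> ring

theorem differentiable_henon : Differentiable ℂ henon := by
  unfold henon; fun_prop

theorem doublingToSecondOrder_henon : DoublingToSecondOrder henon 480 := by
  refine ⟨by simp [henon], fun ρ hρ u hu v hv => ?_⟩
  obtain ⟨u₁, u₂⟩ := u
  obtain ⟨v₁, v₂⟩ := v
  simp only [mem_closedBall_zero_iff, Prod.norm_mk, max_le_iff] at hu hv
  have hρ0 : 0 ≤ ρ := (norm_nonneg u₁).trans hu.1
  have hd : max ‖u₁ - v₁‖ ‖u₂ - v₂‖ = ‖(u₁, u₂) - (v₁, v₂)‖ := rfl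
  set d := ‖(u₁, u₂) - (v₁, v₂)‖
  have hd₁ : ‖u₁ - v₁‖ ≤ d := hd ▸ le_max_left _ _
  have hd₂ : ‖u₂ - v₂‖ ≤ d := hd ▸ le_max_right _ _
  have hsq₁ := norm_sq_sub_sq_le hu.1 hv.1
  have hP : ∀ {a b : ℂ}, ‖a‖ ≤ ρ → ‖b‖ ≤ ρ → ‖2 * b - 4 * a ^ 2‖ ≤ 6 * ρ := fun {a b} ha hb => by
    calc _ ≤ ‖2 * b‖ + ‖4 * a ^ 2‖ := norm_sub_le _ _
      _ = 2 * ‖b‖ + 4 * ‖a‖ ^ 2 := by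
        rw [norm_mul, norm_mul, norm_pow, Complex.norm_ofNat, Complex.norm_ofNat]
      _ ≤ 6 * ρ := by nlinarith [norm_nonneg a]
  have hPd : ‖(2 * u₂ - 4 * u₁ ^ 2) - (2 * v₂ - 4 * v₁ ^ 2)‖ ≤ 10 * d := by
    calc _ = ‖2 * (u₂ - v₂) - 4 * (u₁ ^ 2 - v₁ ^ 2)‖ := by ring_nf
      _ ≤ 2 * ‖u₂ - v₂‖ + 4 * ‖u₁ ^ 2 - v₁ ^ 2‖ := by
        refine (norm_sub_le _ _).trans_eq ?_
        rw [norm_mul, norm_mul, Complex.norm_ofNat, Complex.norm_ofNat]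
      _ ≤ 10 * d := by nlinarith [norm_nonneg (u₁ - v₁)]
  have hsq₂ := norm_sq_sub_sq_le (hP hu.1 hu.2) (hP hv.1 hv.2)
  have e : (henon (u₁, u₂) - (2 : ℂ) • (u₁, u₂)) - (henon (v₁, v₂) - (2 : ℂ) • (v₁, v₂)) =
      (-4 * ((2 * u₂ - 4 * u₁ ^ 2) ^ 2 - (2 * v₂ - 4 * v₁ ^ 2) ^ 2), -4 * (u₁ ^ 2 - v₁ ^ 2)) := by
    simp only [henon, Prod.smul_mk, smul_eq_mul, Prod.mk_sub_mk, Prod.mk.injEq]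
    constructor <;> ring
  rw [e, Prod.norm_mk, norm_mul, norm_mul, norm_neg, Complex.norm_ofNat]
  push_cast
  refine max_le ?_ ?_
  · nlinarith [norm_nonneg ((2 * u₂ - 4 * u₁ ^ 2) - (2 * v₂ - 4 * v₁ ^ 2))]
  · nlinarith [norm_nonneg (u₁ - v₁)]

theorem mapsTo_henonInv :
    MapsTo henonInv {y | 1 + ‖y.1‖ ^ 2 ≤ ‖y.2‖} {y | 1 + ‖y.1‖ ^ 2 ≤ ‖y.2‖} := by
  rintro ⟨z, w⟩ (h : 1 + ‖z‖ ^ 2 ≤ ‖w‖)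
  set a := z + 4 * w ^ 2
  have hz : ‖z‖ ≤ ‖w‖ := by nlinarith [sq_nonneg (‖z‖ - 1)]
  have hw : 1 ≤ ‖w‖ := by nlinarith [sq_nonneg ‖z‖]
  have ha : 3 * ‖w‖ ^ 2 ≤ ‖a‖ := by
    have := norm_sub_norm_le (4 * w ^ 2) (-z)
    rw [sub_neg_eq_add, add_comm, norm_neg, norm_mul, norm_pow, Complex.norm_ofNat] at this
    nlinarith
  show 1 + ‖a / 2‖ ^ 2 ≤ ‖(w + a ^ 2) / 2‖
  have := norm_sub_norm_le (a ^ 2) (-w)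
  rw [sub_neg_eq_add, add_comm, norm_neg, norm_pow] at this
  rw [norm_div, norm_div, Complex.norm_ofNat]
  have hw4 : ‖w‖ ≤ ‖w‖ ^ 2 * ‖w‖ ^ 2 := by
    have : ‖w‖ ≤ ‖w‖ ^ 2 := by nlinarith
    nlinarith
  nlinarith [mul_le_mul ha ha (by positivity) (by positivity)]

/-- there is an injective holomorphic map Φ : ℂ² → ℂ² with image
contained in V = {(z,w) : |w| < 1 + |z|²}. -/
theorem stmt7 :
    ∃ Φ : ℂ × ℂ → ℂ × ℂ,
      Differentiable ℂ Φ ∧ Function.Injective Φ ∧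
      ∀ x : ℂ × ℂ, ‖(Φ x).2‖ < 1 + ‖(Φ x).1‖ ^ 2 := by
  have hG := doublingToSecondOrder_henon
  have hc := differentiable_henon.continuous
  refine ⟨koenigs henon, hG.differentiable_koenigs differentiable_henon,
    hG.injective_koenigs hc leftInverse_henonInv.injective, fun x => ?_⟩
  have hB0 : {y : ℂ × ℂ | 1 + ‖y.1‖ ^ 2 ≤ ‖y.2‖}ᶜ ∈ 𝓝 0 := by
    refine mem_of_superset (ball_mem_nhds 0 one_pos) fun y hy => ?_
    have := (norm_snd_le y).trans_lt (mem_ball_zero_iff.mp hy)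
    simp only [mem_compl_iff, mem_ofPred_eq, not_le]
    nlinarith [sq_nonneg ‖y.1‖]
  simpa using hG.koenigs_notMem hc leftInverse_henonInv mapsTo_henonInv hB0 x
end

section
/- Let f, f₁ : ℂ → ℂ be entire functions with no common zeros and with f₁ not identically zero. Then there exist entire functions g and h such that g(z) = 0 if and only if f₁(z) = 0 for every z ∈ ℂ, and f·g = f₁·(1 + g·h) identically on ℂ (equivalently, 1/g has the same principal parts as the meromorphic function f/f₁, i.e. f/f₁ − 1/g extends to the entire function h). -/
/-!
Near each zero `a` of `f₁` the function `f` does not vanish, so it has a holomorphic logarithm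
`v a`. A Mittag-Leffler construction gives an entire `w` with `w ≡ v a` modulo `f₁` at every zero
`a`: take the part of `v a / f₁` that is singular at `a`, subtract an entire function making it
small on the disc of radius `‖a‖ - 1`, multiply back by `f₁` and sum. Then `e ^ w ≡ f` modulo
`f₁` at every zero, so `f - e ^ w = f₁ * h` with `h` entire, and `g = f₁ * e ^ (-w)` satisfies
`f * g = f₁ * e ^ (-w) * (e ^ w + f₁ * h) = f₁ * (1 + g * h)`.
-/

open Complex Filter Metric Set Topology

section LocallyDvdAt

variable {𝕜 : Type*} [NontriviallyNormedField 𝕜]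

def LocallyDvdAt (g F : 𝕜 → 𝕜) (a : 𝕜) : Prop :=
  ∃ r : 𝕜 → 𝕜, AnalyticAt 𝕜 r a ∧ F =ᶠ[𝓝 a] g * r

variable {g F G r : 𝕜 → 𝕜} {a : 𝕜}

theorem locallyDvdAt_mul_right (hr : AnalyticAt 𝕜 r a) : LocallyDvdAt g (g * r) a :=
  ⟨r, hr, .rfl⟩

theorem LocallyDvdAt.congr (h : LocallyDvdAt g F a) (hFG : F =ᶠ[𝓝 a] G) : LocallyDvdAt g G a :=
  let ⟨r, hr, hFr⟩ := h
  ⟨r, hr, hFG.symm.trans hFr⟩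

theorem LocallyDvdAt.add (hF : LocallyDvdAt g F a) (hG : LocallyDvdAt g G a) :
    LocallyDvdAt g (F + G) a := by
  obtain ⟨r, hr, hFr⟩ := hF
  obtain ⟨s, hs, hGs⟩ := hG
  refine ⟨r + s, hr.add hs, ?_⟩
  filter_upwards [hFr, hGs] with z hz hz'
  simp only [Pi.add_apply, Pi.mul_apply] at *
  rw [hz, hz']; ring

theorem LocallyDvdAt.neg (h : LocallyDvdAt g F a) : LocallyDvdAt g (-F) a := by
  obtain ⟨r, hr, hFr⟩ := h
  refine ⟨-r, hr.neg, ?_⟩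
  filter_upwards [hFr] with z hz
  simp [hz]

theorem LocallyDvdAt.sub (hF : LocallyDvdAt g F a) (hG : LocallyDvdAt g G a) :
    LocallyDvdAt g (F - G) a := by
  simpa [sub_eq_add_neg] using hF.add hG.neg

theorem exists_differentiable_eq_mul_of_locallyDvdAt (hg : Differentiable 𝕜 g)
    (hF : Differentiable 𝕜 F) (hiso : ∀ a, g a = 0 → ∀ᶠ z in 𝓝[≠] a, g z ≠ 0)
    (hdvd : ∀ a, g a = 0 → LocallyDvdAt g F a) :
    ∃ h : 𝕜 → 𝕜, Differentiable 𝕜 h ∧ F = g * h := by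
  classical
  choose r hr hFr using hdvd
  set h : 𝕜 → 𝕜 := fun z => if hz : g z = 0 then r z hz z else F z / g z
  have hloc : ∀ a (ha : g a = 0), h =ᶠ[𝓝 a] r a ha := by
    intro a ha
    filter_upwards [eventually_nhdsWithin_iff.1 (hiso a ha), hFr a ha] with z hz hFz
    rcases eq_or_ne z a with rfl | hza
    · simp [h, ha]
    · have hgz := hz hza
      simp only [h, dif_neg hgz, hFz, Pi.mul_apply]
      field_simp
  refine ⟨h, fun z => ?_, funext fun z => ?_⟩
  · by_cases hz : g z = 0
    · exact (hr z hz).differentiableAt.congr_of_eventuallyEq (hloc z hz)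
    · have : h =ᶠ[𝓝 z] F / g := by
        filter_upwards [hg.continuous.continuousAt.eventually_ne hz] with y hy
        simp [h, hy]
      exact ((hF z).div (hg z) hz).congr_of_eventuallyEq this
  · by_cases hz : g z = 0
    · simpa [hz] using (hFr z hz).self_of_nhds
    · simp only [h, dif_neg hz, Pi.mul_apply]
      field_simp

end LocallyDvdAt

section Zeros

variable {f : ℂ → ℂ}

theorem Differentiable.setOf_ne_zero_mem_codiscrete (hf : Differentiable ℂ f)
    (hne : ∃ z, f z ≠ 0) : {z | f z = 0}ᶜ ∈ codiscrete ℂ :=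
  let ⟨_, hz⟩ := hne
  (hf.differentiableOn.analyticOnNhd isOpen_univ).preimage_zero_mem_codiscrete hz

theorem Differentiable.eventually_nhdsNE_ne_zero (hf : Differentiable ℂ f) (hne : ∃ z, f z ≠ 0)
    (a : ℂ) : ∀ᶠ z in 𝓝[≠] a, f z ≠ 0 := by
  have := mem_codiscrete.1 (hf.setOf_ne_zero_mem_codiscrete hne) a
  rwa [disjoint_principal_right, compl_compl] at this

theorem Differentiable.exists_eq_pow_mul (hf : Differentiable ℂ f) (hne : ∃ z, f z ≠ 0) (a : ℂ) :
    ∃ (m : ℕ) (u : ℂ → ℂ), Differentiable ℂ u ∧ u a ≠ 0 ∧ f = (· - a) ^ m * u := by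
  obtain ⟨y, hy⟩ := hne
  have hord : analyticOrderAt f a ≠ ⊤ :=
    (hf.differentiableOn.analyticOnNhd isOpen_univ).analyticOrderAt_ne_top_of_isPreconnected
      isPreconnected_univ (mem_univ y) (mem_univ a) (by simp [analyticOrderAt_eq_zero.2 (.inr hy)])
  obtain ⟨m, hm⟩ := ENat.ne_top_iff_exists.1 hord
  obtain ⟨g, hg, hga, hfg⟩ := (hf.analyticAt a).analyticOrderAt_eq_natCast.1 hm.symm
  have hzero : ∀ b, (b - a) ^ m = 0 → b = a := fun b hb => sub_eq_zero.1 (eq_zero_of_pow_eq_zero hb)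
  obtain ⟨u, hu, hfu⟩ := exists_differentiable_eq_mul_of_locallyDvdAt (g := (· - a) ^ m)
    (by fun_prop) hf
    (fun b hb => by
      filter_upwards [self_mem_nhdsWithin] with z hz
      exact pow_ne_zero _ (sub_ne_zero.2 (hzero b hb ▸ hz)))
    (fun b hb => by
      obtain rfl := hzero b hb
      exact ⟨g, hg, hfg.mono fun z hz => by simpa using hz⟩)
  have hug : u =ᶠ[𝓝 a] g := by
    refine (hu.continuous.continuousAt.eventuallyEq_nhds_iff_eventuallyEq_nhdsNE
      hg.continuousAt).1 ?_
    filter_upwards [self_mem_nhdsWithin, nhdsWithin_le_nhds hfg] with z hz hfz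
    rw [hfu] at hfz
    exact mul_left_cancel₀ (pow_ne_zero _ (sub_ne_zero.2 hz)) (by simpa using hfz)
  exact ⟨m, u, hu, hug.self_of_nhds ▸ hga, hfu⟩

end Zeros

theorem AnalyticAt.exists_differentiable_locallyDvdAt_sub {q : ℂ → ℂ} {a : ℂ}
    (hq : AnalyticAt ℂ q a) (m : ℕ) :
    ∃ P : ℂ → ℂ, Differentiable ℂ P ∧ LocallyDvdAt ((· - a) ^ m) (q - P) a := by
  have hq0 : AnalyticAt ℂ (fun z => q (z + a)) 0 :=
    hq.comp_of_eq (by fun_prop) (zero_add a)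
  obtain ⟨r, hr, hqr⟩ := hq0.exists_eq_sum_add_pow_mul m
  refine ⟨fun z => ∑ i ∈ Finset.range m,
      ((z - a) ^ i / i.factorial) • iteratedDeriv i (fun z => q (z + a)) 0,
    by fun_prop, fun z => r (z - a), ?_, .of_forall fun z => ?_⟩
  · exact hr.comp_of_eq (by fun_prop) (sub_self a)
  · have := hqr (z - a)
    simp only [sub_add_cancel] at this
    simp only [Pi.sub_apply, Pi.mul_apply, Pi.pow_apply, this, smul_eq_mul]
    ring

/-- `R` is meromorphic with its only pole at `a`, where its principal part is that of `v / f`. -/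
theorem Differentiable.exists_principalPart {f v : ℂ → ℂ} {a : ℂ} (hf : Differentiable ℂ f)
    (hne : ∃ z, f z ≠ 0) (hv : AnalyticAt ℂ v a) :
    ∃ p R : ℂ → ℂ, Differentiable ℂ p ∧ DifferentiableOn ℂ R {a}ᶜ ∧
      (∀ z ≠ a, p z = f z * R z) ∧ LocallyDvdAt f (p - v) a := by
  obtain ⟨m, u, hu, hua, hfu⟩ := hf.exists_eq_pow_mul hne a
  obtain ⟨P, hP, r, hr, hPr⟩ :=
    (hv.div (hu.analyticAt a) hua).exists_differentiable_locallyDvdAt_sub m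
  refine ⟨u * P, fun z => P z / (z - a) ^ m, hu.mul hP, ?_, fun z hz => ?_, -r, hr.neg, ?_⟩
  · exact hP.differentiableOn.div (by fun_prop) fun z hz => pow_ne_zero _ (sub_ne_zero.2 hz)
  · simp only [hfu, Pi.mul_apply, Pi.pow_apply]
    field_simp [pow_ne_zero m (sub_ne_zero.2 hz)]
  · filter_upwards [hPr, hu.continuous.continuousAt.eventually_ne hua] with z hz huz
    simp only [Pi.sub_apply, Pi.mul_apply, Pi.div_apply, Pi.pow_apply, Pi.neg_apply, hfu] at hz ⊢
    field_simp at hz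
    linear_combination -hz

theorem DifferentiableOn.exists_differentiable_norm_sub_lt {R : ℂ → ℂ} {c : ℂ} {ρ r ε : ℝ}
    (hR : DifferentiableOn ℂ R (ball c ρ)) (hr : r < ρ) (hε : 0 < ε) :
    ∃ T : ℂ → ℂ, Differentiable ℂ T ∧ ∀ z ∈ ball c r, ‖R z - T z‖ < ε := by
  rcases le_or_gt r 0 with hr0 | hr0
  · exact ⟨0, differentiable_const 0, by simp [ball_eq_empty.2 hr0]⟩
  obtain ⟨ρ', hrρ', hρ'ρ⟩ := exists_between hr
  lift ρ' to NNReal using (hr0.trans hrρ').le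
  lift r to NNReal using hr0.le
  have hps := (hR.mono (closedBall_subset_ball hρ'ρ)).hasFPowerSeriesOnBall
    (by exact_mod_cast hr0.trans hrρ')
  obtain ⟨N, hN⟩ := (Metric.tendstoUniformlyOn_iff.1
    (hps.tendstoUniformlyOn' (by exact_mod_cast hrρ')) ε hε).exists
  refine ⟨fun z => (cauchyPowerSeries R c ρ').partialSum N (z - c), ?_,
    fun z hz => by simpa [dist_eq_norm] using hN z hz⟩
  simp only [FormalMultilinearSeries.partialSum, FormalMultilinearSeries.apply_eq_pow_smul_coeff]
  fun_prop

theorem Differentiable.exists_principalPart_norm_lt {f v : ℂ → ℂ} {a : ℂ} {r ε : ℝ}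
    (hf : Differentiable ℂ f) (hne : ∃ z, f z ≠ 0) (hv : AnalyticAt ℂ v a) (hr : r < ‖a‖)
    (hε : 0 < ε) :
    ∃ t Q : ℂ → ℂ, Differentiable ℂ t ∧ DifferentiableOn ℂ Q {a}ᶜ ∧
      (∀ z ≠ a, t z = f z * Q z) ∧ LocallyDvdAt f (t - v) a ∧ ∀ z ∈ ball 0 r, ‖Q z‖ < ε := by
  obtain ⟨p, R, hp, hR, hpR, hpv⟩ := hf.exists_principalPart hne hv
  have hRa : DifferentiableOn ℂ R (ball 0 ‖a‖) :=
    hR.mono fun z hz hza => by simp [mem_singleton_iff.1 hza] at hz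
  obtain ⟨T, hT, hRT⟩ := hRa.exists_differentiable_norm_sub_lt hr hε
  refine ⟨p - f * T, R - T, hp.sub (hf.mul hT), hR.sub hT.differentiableOn,
    fun z hz => by simp [hpR z hz, mul_sub], ?_, hRT⟩
  have := hpv.sub (locallyDvdAt_mul_right (g := f) (hT.analyticAt a))
  rwa [sub_right_comm] at this

section MittagLeffler

theorem differentiableOn_tsum_of_summable_of_eventually_norm_le {ι : Type*} {F : ι → ℂ → ℂ}
    {U : Set ℂ} {u : ι → ℝ} (hu : Summable u) (hF : ∀ i, DifferentiableOn ℂ (F i) U)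
    (hU : IsOpen U) (hFu : ∀ᶠ i in cofinite, ∀ z ∈ U, ‖F i z‖ ≤ u i) :
    DifferentiableOn ℂ (fun z => ∑' i, F i z) U :=
  (tendstoUniformlyOn_tsum_of_cofinite_eventually hu hFu).tendstoLocallyUniformlyOn.differentiableOn
    (.of_forall fun _ => DifferentiableOn.fun_sum fun i _ => hF i) hU

variable {ι : Type*} {f : ℂ → ℂ} {a : ι → ℂ} {t Q : ι → ℂ → ℂ} {ε : ι → ℝ}

theorem exists_forall_eventually_norm_le_mul (hf : Continuous f)
    (htQ : ∀ i z, z ≠ a i → t i z = f z * Q i z)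
    (hfar : ∀ ρ, ∀ᶠ i in cofinite, ∀ z ∈ ball (0 : ℂ) ρ, z ≠ a i ∧ ‖Q i z‖ ≤ ε i) (ρ : ℝ) :
    ∃ C, ∀ᶠ i in cofinite, ∀ z ∈ ball (0 : ℂ) ρ, ‖t i z‖ ≤ C * ε i := by
  obtain ⟨C, hC⟩ := (isCompact_closedBall (0 : ℂ) ρ).exists_bound_of_continuousOn hf.continuousOn
  refine ⟨C, ?_⟩
  filter_upwards [hfar ρ] with i hi z hz
  obtain ⟨hza, hQz⟩ := hi z hz
  have hfz := hC z (ball_subset_closedBall hz)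
  rw [htQ i z hza, norm_mul]
  exact mul_le_mul hfz hQz (norm_nonneg _) ((norm_nonneg _).trans hfz)

theorem differentiable_tsum_of_forall_eventually_norm_le_mul (ht : ∀ i, Differentiable ℂ (t i))
    (hε : Summable ε)
    (hbound : ∀ ρ, ∃ C, ∀ᶠ i in cofinite, ∀ z ∈ ball (0 : ℂ) ρ, ‖t i z‖ ≤ C * ε i) :
    Differentiable ℂ (fun z => ∑' i, t i z) := fun z => by
  obtain ⟨C, hC⟩ := hbound (‖z‖ + 1)
  exact (differentiableOn_tsum_of_summable_of_eventually_norm_le (hε.mul_left C)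
    (fun i => (ht i).differentiableOn) isOpen_ball hC).differentiableAt
    (isOpen_ball.mem_nhds (by simp))

theorem locallyDvdAt_tsum_sub [DecidableEq ι] (hε : Summable ε)
    (hQ : ∀ i, DifferentiableOn ℂ (Q i) {a i}ᶜ) (htQ : ∀ i z, z ≠ a i → t i z = f z * Q i z)
    (hfar : ∀ ρ, ∀ᶠ i in cofinite, ∀ z ∈ ball (0 : ℂ) ρ, z ≠ a i ∧ ‖Q i z‖ ≤ ε i)
    (hsum : ∀ z, Summable fun i => t i z) (n : ι) (hsep : ∀ᶠ z in 𝓝 (a n), ∀ i ≠ n, z ≠ a i) :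
    LocallyDvdAt f ((fun z => ∑' i, t i z) - t n) (a n) := by
  obtain ⟨δ, hδ, hsepδ⟩ := Metric.eventually_nhds_iff_ball.1 hsep
  set G : ℂ → ℂ := fun z => ∑' i, if i = n then 0 else Q i z
  have hG : DifferentiableOn ℂ G (ball (a n) δ) := by
    refine differentiableOn_tsum_of_summable_of_eventually_norm_le hε (fun i => ?_) isOpen_ball ?_
    · split_ifs with hin
      · exact differentiableOn_const 0
      · exact (hQ i).mono fun z hz => hsepδ z hz i hin
    · filter_upwards [hfar (‖a n‖ + δ)] with i hi z hz
      have hQz := (hi z (ball_subset_ball' (by simp [add_comm]) hz)).2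
      split_ifs
      · simpa using (norm_nonneg _).trans hQz
      · exact hQz
  have hball : ball (a n) δ ∈ 𝓝 (a n) := isOpen_ball.mem_nhds (mem_ball_self hδ)
  refine ⟨G, hG.analyticAt hball, ?_⟩
  filter_upwards [hball] with z hz
  simp only [Pi.sub_apply, Pi.mul_apply, G]
  rw [(hsum z).tsum_eq_add_tsum_ite n, add_sub_cancel_left, ← tsum_mul_left]
  refine tsum_congr fun i => ?_
  split_ifs with hin
  · simp
  · exact htQ i z (hsepδ z hz i hin)

end MittagLeffler

theorem Differentiable.exists_differentiable_locallyDvdAt_sub {f : ℂ → ℂ}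
    (hf : Differentiable ℂ f) (hne : ∃ z, f z ≠ 0) (v : ℂ → ℂ → ℂ)
    (hv : ∀ a, f a = 0 → AnalyticAt ℂ (v a) a) :
    ∃ w, Differentiable ℂ w ∧ ∀ a, f a = 0 → LocallyDvdAt f (w - v a) a := by
  classical
  set S := {z | f z = 0}
  obtain ⟨hSc, hSd⟩ := compl_mem_codiscrete_iff.1 (hf.setOf_ne_zero_mem_codiscrete hne)
  have hS : Tendsto (fun i : S => ‖(i : ℂ)‖) cofinite atTop :=
    tendsto_norm_cocompact_atTop.comp (hSc.tendsto_coe_cofinite_of_isDiscrete hSd)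
  have : Countable S := by
    have := hSd.to_subtype
    exact countable_of_Lindelof_of_discrete
  obtain ⟨ε, hε, c, hεc, -⟩ := (Set.countable_coe_iff.1 this).exists_pos_hasSum_le one_pos
  choose t Q ht hQ htQ htv hQε using fun i : S =>
    hf.exists_principalPart_norm_lt hne (hv i i.2) (sub_one_lt ‖(i : ℂ)‖) (hε i)
  have hfar : ∀ ρ, ∀ᶠ i : S in cofinite, ∀ z ∈ ball (0 : ℂ) ρ, z ≠ i ∧ ‖Q i z‖ ≤ ε i := by
    intro ρ
    filter_upwards [hS.eventually_gt_atTop (ρ + 1)] with i hi z hz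
    rw [mem_ball_zero_iff] at hz
    exact ⟨by rintro rfl; linarith, (hQε i z (mem_ball_zero_iff.2 (by linarith))).le⟩
  have hbound := exists_forall_eventually_norm_le_mul hf.continuous htQ hfar
  have hsum : ∀ z, Summable fun i => t i z := fun z => by
    obtain ⟨C, hC⟩ := hbound (‖z‖ + 1)
    exact (hεc.summable.mul_left C).of_norm_bounded_eventually
      (hC.mono fun i hi => hi z (by simp))
  refine ⟨fun z => ∑' i, t i z,
    differentiable_tsum_of_forall_eventually_norm_le_mul ht hεc.summable hbound, fun a ha => ?_⟩
  have hsep : ∀ᶠ z in 𝓝 a, ∀ i : S, i ≠ ⟨a, ha⟩ → z ≠ (i : ℂ) := by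
    filter_upwards [eventually_nhdsWithin_iff.1 (hf.eventually_nhdsNE_ne_zero hne a)]
      with z hz i hi
    rintro rfl
    exact hz (fun h => hi (Subtype.ext h)) i.2
  have := (locallyDvdAt_tsum_sub (a := Subtype.val) hεc.summable hQ htQ hfar hsum ⟨a, ha⟩
    hsep).add (htv ⟨a, ha⟩)
  simpa using this

theorem AnalyticAt.exists_analyticAt_exp_comp_eventuallyEq {f : ℂ → ℂ} {a : ℂ}
    (hf : AnalyticAt ℂ f a) (ha : f a ≠ 0) :
    ∃ v : ℂ → ℂ, AnalyticAt ℂ v a ∧ Complex.exp ∘ v =ᶠ[𝓝 a] f := by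
  refine ⟨fun z => Complex.log (f z / f a) + Complex.log (f a), ?_, ?_⟩
  · refine .add ((analyticAt_clog ?_).comp (hf.div analyticAt_const ha)) analyticAt_const
    simp [div_self ha]
  · filter_upwards [hf.continuousAt.eventually_ne ha] with z hz
    simp only [Function.comp_apply, exp_add, exp_log (div_ne_zero hz ha), exp_log ha]
    field_simp

theorem LocallyDvdAt.exp_comp_sub {g w v : ℂ → ℂ} {a : ℂ} (h : LocallyDvdAt g (w - v) a)
    (hw : AnalyticAt ℂ w a) (hv : AnalyticAt ℂ v a) :
    LocallyDvdAt g (exp ∘ w - exp ∘ v) a := by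
  obtain ⟨r, hr, hwv⟩ := h
  have hE : Differentiable ℂ (dslope exp 0) := differentiableOn_univ.1 <|
    (Complex.differentiableOn_dslope univ_mem).2 differentiable_exp.differentiableOn
  refine ⟨fun z => exp (v z) * dslope exp 0 (w z - v z) * r z,
    (hv.cexp.mul ((hE.analyticAt _).comp (hw.sub hv))).mul hr, ?_⟩
  -- `exp w - exp v = exp v * (exp (w - v) - 1)` and `exp d - 1 = d * dslope exp 0 d`.
  filter_upwards [hwv] with z hz
  have key := sub_smul_dslope exp 0 (w z - v z)
  have hexp : exp (w z) = exp (v z) * exp (w z - v z) := by rw [← exp_add, add_sub_cancel]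
  simp only [sub_zero, smul_eq_mul, exp_zero] at key
  simp only [Pi.sub_apply, Pi.mul_apply, Function.comp_apply] at hz ⊢
  linear_combination hexp - exp (v z) * key + exp (v z) * dslope exp 0 (w z - v z) * hz

/-- for entire f, f₁ with no common zeros and f₁ not identically
zero, there are entire g, h with g vanishing exactly where f₁ does and
f·g = f₁·(1 + g·h), i.e. 1/g has the same principal parts as f/f₁. -/
theorem stmt9 (f f₁ : ℂ → ℂ) (hf : Differentiable ℂ f) (hf₁ : Differentiable ℂ f₁)
    (hff₁ : ∀ z : ℂ, ¬(f z = 0 ∧ f₁ z = 0)) (hf₁0 : ∃ z : ℂ, f₁ z ≠ 0) :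
    ∃ g h : ℂ → ℂ,
      Differentiable ℂ g ∧ Differentiable ℂ h ∧
      (∀ z : ℂ, g z = 0 ↔ f₁ z = 0) ∧
      ∀ z : ℂ, f z * g z = f₁ z * (1 + g z * h z) := by
  choose! v hv hvf using fun a (ha : f₁ a = 0) =>
    (hf.analyticAt a).exists_analyticAt_exp_comp_eventuallyEq fun hfa => hff₁ a ⟨hfa, ha⟩
  obtain ⟨w, hw, hwv⟩ := hf₁.exists_differentiable_locallyDvdAt_sub hf₁0 v hv
  obtain ⟨h, hh, hfh⟩ := exists_differentiable_eq_mul_of_locallyDvdAt hf₁ (hf.sub hw.cexp)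
    (fun a _ => hf₁.eventually_nhdsNE_ne_zero hf₁0 a) fun a ha =>
      ((hwv a ha).exp_comp_sub (hw.analyticAt a) (hv a ha)).neg.congr <| by
        filter_upwards [hvf a ha] with z hz
        simp [← hz]
  refine ⟨fun z => f₁ z * exp (-w z), h, hf₁.mul hw.neg.cexp, hh, fun z => by simp, fun z => ?_⟩
  have hfz : f z - exp (w z) = f₁ z * h z := congrFun hfh z
  have hexp : exp (-w z) * exp (w z) = 1 := by rw [← exp_add, neg_add_cancel, exp_zero]
  linear_combination f₁ z * exp (-w z) * hfz + f₁ z * hexp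
end

section
/- Let G be a group whose commutator subgroup ⁅G, G⁆ is contained in the center of G and is finite with exactly n elements, and let m = 2n. Then for all a, b ∈ G one has (ab)^m = a^m · b^m and a^m · b^m = b^m · a^m; consequently the set {a^m : a ∈ G} is an abelian subgroup of G. -/
/-!
Write `c = ⁅b, a⁆`, so that `b * a = c * (a * b)` with `c` central. Moving the letters of a word
past each other one at a time gives `b ^ j * a ^ k = c ^ (j * k) * (a ^ k * b ^ j)` and
`(a * b) ^ k = c ^ (k.choose 2) * (a ^ k * b ^ k)`. Every commutator has order dividing
`n = |⁅G, G⁆|`, and for `m = 2n` both `m.choose 2 = n (2n - 1)` and `m * m` are multiples of `n`,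
so the correction factors vanish and `a ↦ a ^ m` is a homomorphism with abelian image.
-/

section Monoid

variable {M : Type*} [Monoid M] {a b c : M}

theorem pow_mul_eq_of_mul_eq_mul_mul (hcb : Commute c b) (h : b * a = c * (a * b)) (j : ℕ) :
    b ^ j * a = c ^ j * (a * b ^ j) := by
  induction j with
  | zero => simp
  | succ j ih =>
    calc b ^ (j + 1) * a = b ^ j * c * (a * b) := by rw [pow_succ, mul_assoc, h, mul_assoc]
      _ = c * (b ^ j * a) * b := by rw [(hcb.pow_right j).eq.symm]; simp only [mul_assoc]
      _ = c ^ (j + 1) * (a * b ^ (j + 1)) := by rw [ih, pow_succ', pow_succ]; simp only [mul_assoc]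

theorem pow_mul_pow_eq_of_mul_eq_mul_mul (hca : Commute c a) (hcb : Commute c b)
    (h : b * a = c * (a * b)) (j k : ℕ) :
    b ^ j * a ^ k = c ^ (j * k) * (a ^ k * b ^ j) := by
  induction k with
  | zero => simp
  | succ k ih =>
    calc b ^ j * a ^ (k + 1) = c ^ (j * k) * (a ^ k * (b ^ j * a)) := by
          rw [pow_succ, ← mul_assoc, ih]; simp only [mul_assoc]
      _ = c ^ (j * k) * (a ^ k * c ^ j) * (a * b ^ j) := by
          rw [pow_mul_eq_of_mul_eq_mul_mul hcb h]; simp only [mul_assoc]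
      _ = c ^ (j * (k + 1)) * (a ^ (k + 1) * b ^ j) := by
          rw [(hca.pow_pow j k).eq.symm, Nat.mul_succ, pow_add, pow_succ]; simp only [mul_assoc]

theorem mul_pow_eq_of_mul_eq_mul_mul (hca : Commute c a) (hcb : Commute c b)
    (h : b * a = c * (a * b)) (k : ℕ) :
    (a * b) ^ k = c ^ k.choose 2 * (a ^ k * b ^ k) := by
  induction k with
  | zero => simp
  | succ k ih =>
    calc (a * b) ^ (k + 1) = c ^ k.choose 2 * (a ^ k * (b ^ k * a)) * b := by
          rw [pow_succ, ih]; simp only [mul_assoc]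
      _ = c ^ k.choose 2 * (a ^ k * c ^ k) * (a * b ^ k * b) := by
          rw [pow_mul_eq_of_mul_eq_mul_mul hcb h]; simp only [mul_assoc]
      _ = c ^ (k + 1).choose 2 * (a ^ (k + 1) * b ^ (k + 1)) := by
          rw [(hca.pow_pow k k).eq.symm, Nat.choose_succ_left _ _ (by omega), Nat.choose_one_right,
            Nat.add_comm k, pow_add, pow_succ, pow_succ]
          simp only [mul_assoc]

end Monoid

open scoped commutatorElement

section Group

variable {G : Type*} [Group G]

theorem mul_eq_commutatorElement_mul_mul (a b : G) : b * a = ⁅b, a⁆ * (a * b) := by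
  group

theorem commutatorElement_pow_card_commutator (a b : G) : ⁅a, b⁆ ^ Nat.card (commutator G) = 1 := by
  have hmem : ⁅a, b⁆ ∈ commutator G :=
    Subgroup.commutator_mem_commutator (Subgroup.mem_top a) (Subgroup.mem_top b)
  exact congrArg Subtype.val (pow_card_eq_one' (x := (⟨⁅a, b⁆, hmem⟩ : commutator G)))

theorem commute_commutatorElement_of_commutator_le_center
    (hcen : commutator G ≤ Subgroup.center G) (a b x : G) : Commute ⁅a, b⁆ x :=
  Subgroup.mem_center_iff.mp (hcen (Subgroup.commutator_mem_commutator
    (Subgroup.mem_top a) (Subgroup.mem_top b))) x |>.symm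

theorem mul_pow_of_card_commutator_dvd (hcen : commutator G ≤ Subgroup.center G) {m : ℕ}
    (hm : Nat.card (commutator G) ∣ m.choose 2) (a b : G) : (a * b) ^ m = a ^ m * b ^ m := by
  obtain ⟨t, ht⟩ := hm
  have hc := commute_commutatorElement_of_commutator_le_center hcen b a
  rw [mul_pow_eq_of_mul_eq_mul_mul (hc a) (hc b) (mul_eq_commutatorElement_mul_mul a b), ht,
    pow_mul, commutatorElement_pow_card_commutator, one_pow, one_mul]

theorem commute_pow_pow_of_card_commutator_dvd (hcen : commutator G ≤ Subgroup.center G)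
    {j k : ℕ} (hjk : Nat.card (commutator G) ∣ j * k) (a b : G) : Commute (a ^ k) (b ^ j) := by
  obtain ⟨t, ht⟩ := hjk
  have hc := commute_commutatorElement_of_commutator_le_center hcen b a
  have hswap :=
    pow_mul_pow_eq_of_mul_eq_mul_mul (hc a) (hc b) (mul_eq_commutatorElement_mul_mul a b) j k
  rw [ht, pow_mul, commutatorElement_pow_card_commutator, one_pow, one_mul] at hswap
  exact hswap.symm

end Group

theorem stmt11_general (G : Type*) [Group G] (n : ℕ)
    (hcen : commutator G ≤ Subgroup.center G)
    (hcard : Nat.card (commutator G) = n) (m : ℕ) (hm : m = 2 * n) :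
    (∀ a b : G, (a * b) ^ m = a ^ m * b ^ m) ∧
    (∀ a b : G, a ^ m * b ^ m = b ^ m * a ^ m) ∧
    ∃ H : Subgroup G, (H : Set G) = Set.range (fun a : G => a ^ m) ∧
      ∀ x ∈ H, ∀ y ∈ H, x * y = y * x := by
  have hchoose : Nat.card (commutator G) ∣ m.choose 2 := by
    rw [hcard, hm, Nat.choose_two_right, mul_assoc, Nat.mul_div_cancel_left _ two_pos]
    exact dvd_mul_right n _
  have hsq : Nat.card (commutator G) ∣ m * m := hcard ▸ hm ▸ ⟨4 * n, by ring⟩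
  have hmul := mul_pow_of_card_commutator_dvd hcen hchoose
  have hcomm := commute_pow_pow_of_card_commutator_dvd hcen hsq
  refine ⟨hmul, fun a b => (hcomm a b).eq,
    (MonoidHom.mk' (· ^ m) hmul).range, MonoidHom.coe_range _, ?_⟩
  rintro _ ⟨a, rfl⟩ _ ⟨b, rfl⟩
  exact (hcomm a b).eq

/-- if the commutator subgroup of G lies in the center and has
exactly n elements, and m = 2n, then (ab)^m = a^m b^m, powers a^m and b^m
commute, and {a^m : a ∈ G} is an abelian subgroup of G. -/
theorem stmt11 (G : Type*) [Group G] (n : ℕ) (hn : 0 < n)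
    (hcen : commutator G ≤ Subgroup.center G)
    (hcard : Nat.card (commutator G) = n) (m : ℕ) (hm : m = 2 * n) :
    (∀ a b : G, (a * b) ^ m = a ^ m * b ^ m) ∧
    (∀ a b : G, a ^ m * b ^ m = b ^ m * a ^ m) ∧
    ∃ H : Subgroup G, (H : Set G) = Set.range (fun a : G => a ^ m) ∧
      ∀ x ∈ H, ∀ y ∈ H, x * y = y * x :=
  stmt11_general G n hcen hcard m hm
end

section
/- Define h : ℂ → ℂ² by h(z) = (sin(2πz), sin(2πz²)). If P is a polynomial in two complex variables such that P(h(z)) = 0 for all z ∈ ℂ, then P = 0; that is, the image of h is Zariski dense in ℂ². -/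
open Complex MvPolynomial

private lemma eval_aeval_pair (P : MvPolynomial (Fin 2) ℂ) (f : Fin 2 → Polynomial ℂ)
    (y : ℂ) :
    Polynomial.eval y (aeval f P) = eval (fun i => Polynomial.eval y (f i)) P := by
  induction P using MvPolynomial.induction_on with
  | C a => simp
  | add p q hp hq => simp [hp, hq]
  | mul_X p i hp => simp [hp]

private lemma normSq_sin (a b : ℝ) :
    Complex.normSq (Complex.sin ((a : ℂ) + (b : ℂ) * I)) =
      Real.sin a ^ 2 + Real.sinh b ^ 2 := by
  rw [Complex.sin_add_mul_I]
  have h1 : Complex.sin (a : ℂ) * Complex.cosh (b : ℂ) +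
      Complex.cos (a : ℂ) * Complex.sinh (b : ℂ) * I =
      ((Real.sin a * Real.cosh b : ℝ) : ℂ) + ((Real.cos a * Real.sinh b : ℝ) : ℂ) * I := by
    push_cast [Complex.ofReal_sin, Complex.ofReal_cos, Complex.ofReal_sinh,
      Complex.ofReal_cosh]
    ring
  rw [h1, Complex.normSq_add_mul_I]
  nlinarith [Real.sin_sq_add_cos_sq a, Real.cosh_sq b]

/-- the image of h(z) = (sin 2πz, sin 2πz²) is Zariski dense in
ℂ²: any polynomial vanishing on it is zero. -/
theorem stmt13 (P : MvPolynomial (Fin 2) ℂ)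
    (hP : ∀ z : ℂ,
      eval ![Complex.sin (2 * (Real.pi : ℂ) * z),
             Complex.sin (2 * (Real.pi : ℂ) * z ^ 2)] P = 0) :
    P = 0 := by
  set π := Real.pi with hπdef
  have hπ : (1:ℝ) < 4 * π := by nlinarith [Real.pi_gt_three]
  -- key: sinh (4πs) > 1 for s ≥ 1
  have hsinh1 : ∀ s : ℝ, 1 ≤ s → 1 < Real.sinh (4 * π * s) := by
    intro s hs
    have h4 : (1:ℝ) < 4 * π * s := by nlinarith [Real.pi_gt_three]
    calc (1:ℝ) < 4 * π * s := h4
      _ < Real.sinh (4 * π * s) := Real.self_lt_sinh_iff.mpr (by linarith)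
  -- stage 1 : for every s ≥ 1 and every y, P(sin(2πIs), y) = 0
  have stage1 : ∀ s : ℝ, 1 ≤ s → ∀ y : ℂ,
      eval ![Complex.sin (2 * (π : ℂ) * (I * s)), y] P = 0 := by
    intro s hs y
    set a : ℂ := Complex.sin (2 * (π : ℂ) * (I * s)) with ha
    set Q : Polynomial ℂ := aeval ![Polynomial.C a, Polynomial.X] P with hQ
    have hQeval : ∀ w : ℂ, Q.eval w = eval ![a, w] P := by
      intro w
      rw [hQ, eval_aeval_pair]
      have hfe : (fun i => Polynomial.eval w (![Polynomial.C a, Polynomial.X] i)) = ![a, w] := by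
        funext i; fin_cases i <;> simp
      rw [hfe]
    -- the values v n are roots of Q
    have hroot : ∀ n : ℕ, Q.eval (Complex.sin (2 * (π : ℂ) * (I * s + n) ^ 2)) = 0 := by
      intro n
      rw [hQeval]
      have hper : Complex.sin (2 * (π : ℂ) * (I * s + n)) = a := by
        have := (Complex.sin_periodic.nat_mul n) (2 * (π : ℂ) * (I * s))
        rw [ha]
        rw [show 2 * (π : ℂ) * (I * s + n) = 2 * (π : ℂ) * (I * s) + (n : ℂ) * (2 * π) by
          push_cast; ring]
        exact this
      have := hP (I * s + n)
      rwa [hper] at this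
    -- v n written in real/imag form
    have hv : ∀ n : ℕ, Complex.sin (2 * (π : ℂ) * (I * s + n) ^ 2) =
        Complex.sin (((2 * π * ((n:ℝ)^2 - s^2) : ℝ) : ℂ) + ((4 * π * n * s : ℝ) : ℂ) * I) := by
      intro n
      congr 1
      push_cast
      linear_combination (2 * (π:ℂ) * (s:ℂ)^2) * Complex.I_sq
    -- injectivity of n ↦ v n via strictly increasing normSq
    have hnormSq : ∀ n : ℕ, Complex.normSq (Complex.sin (2 * (π : ℂ) * (I * s + n) ^ 2)) =
        Real.sin (2 * π * ((n:ℝ)^2 - s^2)) ^ 2 + Real.sinh (4 * π * n * s) ^ 2 := by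
      intro n
      rw [hv n, normSq_sin]
    have hmono : ∀ m n : ℕ, m < n →
        Complex.normSq (Complex.sin (2 * (π : ℂ) * (I * s + m) ^ 2)) <
        Complex.normSq (Complex.sin (2 * (π : ℂ) * (I * s + n) ^ 2)) := by
      intro m n hmn
      rw [hnormSq m, hnormSq n]
      have hm0 : (0:ℝ) ≤ 4 * π * m * s := by positivity
      have hstep : Real.cosh (4 * π * m * s) < Real.sinh (4 * π * n * s) := by
        have h1 : Real.sinh (4 * π * m * s + 4 * π * s) ≤ Real.sinh (4 * π * n * s) := by
          rw [Real.sinh_le_sinh]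
          have h : (m:ℝ) + 1 ≤ n := by exact_mod_cast hmn
          have := mul_le_mul_of_nonneg_left h (show (0:ℝ) ≤ 4 * π * s by positivity)
          linarith
        have h2 : Real.cosh (4 * π * m * s) < Real.sinh (4 * π * m * s + 4 * π * s) := by
          rw [Real.sinh_add]
          have hsh : 1 < Real.sinh (4 * π * s) := hsinh1 s hs
          have hch : 0 < Real.cosh (4 * π * m * s) := Real.cosh_pos _
          have hsm : 0 ≤ Real.sinh (4 * π * m * s) := Real.sinh_nonneg_iff.mpr hm0
          have hcs : 1 ≤ Real.cosh (4 * π * s) := Real.one_le_cosh _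
          nlinarith
        linarith
      have hbm : Real.sin (2 * π * ((m:ℝ)^2 - s^2)) ^ 2 + Real.sinh (4 * π * m * s) ^ 2
          ≤ Real.cosh (4 * π * m * s) ^ 2 := by
        have := Real.cosh_sq (4 * π * m * s)
        nlinarith [Real.neg_one_le_sin (2 * π * ((m:ℝ)^2 - s^2)),
          Real.sin_le_one (2 * π * ((m:ℝ)^2 - s^2))]
      have hcp : 0 < Real.cosh (4 * π * m * s) := Real.cosh_pos _
      have hsn : 0 ≤ Real.sin (2 * π * ((n:ℝ)^2 - s^2)) ^ 2 := sq_nonneg _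
      nlinarith
    have hinj : Function.Injective (fun n : ℕ => Complex.sin (2 * (π:ℂ) * (I * s + n) ^ 2)) := by
      intro m n h
      by_contra hne
      rcases lt_or_gt_of_ne hne with h' | h'
      · exact absurd (congrArg Complex.normSq h) (ne_of_lt (hmono m n h'))
      · exact absurd (congrArg Complex.normSq h) (ne_of_gt (hmono n m h'))
    have hQ0 : Q = 0 := by
      apply Polynomial.eq_zero_of_infinite_isRoot
      apply Set.Infinite.mono (s := Set.range (fun n : ℕ => Complex.sin (2 * (π:ℂ) * (I * s + n) ^ 2)))
      · rintro _ ⟨n, rfl⟩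
        exact hroot n
      · exact Set.infinite_range_of_injective hinj
    have := hQeval y
    rw [hQ0] at this
    simpa using this.symm
  -- stage 2 : for all x y, P(x,y) = 0
  have stage2 : ∀ x y : ℂ, eval ![x, y] P = 0 := by
    intro x y
    set R : Polynomial ℂ := aeval ![Polynomial.X, Polynomial.C y] P with hR
    have hReval : ∀ w : ℂ, R.eval w = eval ![w, y] P := by
      intro w
      rw [hR, eval_aeval_pair]
      have hfe : (fun i => Polynomial.eval w (![Polynomial.X, Polynomial.C y] i)) = ![w, y] := by
        funext i; fin_cases i <;> simp
      rw [hfe]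
    have hroot : ∀ k : ℕ, R.eval (Complex.sin (2 * (π:ℂ) * (I * ((k:ℝ) + 1 : ℝ)))) = 0 := by
      intro k
      rw [hReval]
      exact stage1 ((k:ℝ) + 1) (by simp) y
    have hform : ∀ s : ℝ, Complex.sin (2 * (π:ℂ) * (I * (s:ℂ))) =
        ((Real.sinh (2 * π * s) : ℝ) : ℂ) * I := by
      intro s
      rw [show 2 * (π:ℂ) * (I * (s:ℂ)) = ((2 * π * s : ℝ) : ℂ) * I by push_cast; ring,
        Complex.sin_mul_I, Complex.ofReal_sinh]
    have hinj : Function.Injective (fun k : ℕ => Complex.sin (2 * (π:ℂ) * (I * (((k:ℝ) + 1 : ℝ) : ℂ)))) := by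
      intro m n h
      simp only [hform] at h
      have h2 := Complex.ofReal_injective (mul_right_cancel₀ Complex.I_ne_zero h)
      have h3 := Real.sinh_injective h2
      have h4 : ((m:ℝ) + 1) = (n:ℝ) + 1 :=
        mul_left_cancel₀ (show (2*π:ℝ) ≠ 0 by positivity) h3
      have : (m:ℝ) = n := by linarith
      exact_mod_cast this
    have hR0 : R = 0 := by
      apply Polynomial.eq_zero_of_infinite_isRoot
      apply Set.Infinite.mono
        (s := Set.range (fun k : ℕ => Complex.sin (2 * (π:ℂ) * (I * (((k:ℝ) + 1 : ℝ) : ℂ)))))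
      · rintro _ ⟨k, rfl⟩
        exact hroot k
      · exact Set.infinite_range_of_injective hinj
    have := hReval x
    rw [hR0] at this
    simpa using this.symm
  apply MvPolynomial.funext
  intro x
  have hx : x = ![x 0, x 1] := by
    funext i; fin_cases i <;> rfl
  rw [hx]
  simpa using stage2 (x 0) (x 1)
end
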